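/- arXiv:1602.06159 — 3 statements merged into one kernel-verified Lean document; each statement's English description precedes it below -/
import Mathlib

section
/- The Barabási-Albert preferential attachment graph BA_n (with m=1) and the evolving copying model graph Z_n (with out-degree 1 and copy factor 1/2) are identically distributed as random directed graphs on n vertices. -/
attribute [local instance] Classical.propDecidable

/-- Head-choice functions: for each `j ∈ [2,n]`, a head in `[1,j-1]` for the edge `e_j`
(the edge `e_1` is the fixed self-loop at vertex `1`). -/
abbrev ParF (n : ℕ) : Type :=
  ∀ j : (Finset.Icc 2 n : Finset ℕ), (Finset.Icc 1 ((j : ℕ) - 1) : Finset ℕ)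

/-- Extension of a head-choice function to all of `ℕ`, with `head(e_1) = 1` (self-loop). -/
def extF (n : ℕ) (f : ParF n) : ℕ → ℕ := fun k =>
  if h : k ∈ Finset.Icc 2 n then (f ⟨k, h⟩ : ℕ) else 1

/-- The degree of vertex `i` in the graph `BA_{j-1}` consisting of edges
`e_1,…,e_{j-1}` with heads given by `g` (each vertex `k ≤ j-1` contributes
out-degree `1`; in-degree counts the `k ≤ j-1` with `head(e_k) = i`). -/
def degAt (g : ℕ → ℕ) (j i : ℕ) : ℕ :=
  (if 1 ≤ i ∧ i ≤ j - 1 then 1 else 0) +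
    ((Finset.Icc 1 (j - 1)).filter (fun k => g k = i)).card

/-- The head of the edge `e'_j` in the evolving copying model `Z_n` with out-degree `1`
and copy factor `1/2`: if `b_j = 1` take `u(j)`, otherwise copy `head(e'_{u(j)})`. -/
def headZ (n : ℕ) (u : ParF n) (b : (Finset.Icc 2 n : Finset ℕ) → Bool) : ℕ → ℕ
  | j =>
    if h : j ∈ Finset.Icc 2 n then
      if b ⟨j, h⟩ then (u ⟨j, h⟩ : ℕ)
      else
        have hlt : ((u ⟨j, h⟩ : ℕ)) < j := by
          have h2 := (u ⟨j, h⟩).2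
          simp only [Finset.mem_Icc] at h2 h
          omega
        headZ n u b (u ⟨j, h⟩)
    else 1
  termination_by j => j
  decreasing_by exact hlt

namespace BAaux

lemma headZ_eq (n : ℕ) (u : ParF n) (b : (Finset.Icc 2 n : Finset ℕ) → Bool) (j : ℕ) :
    headZ n u b j = if h : j ∈ Finset.Icc 2 n then
      (if b ⟨j, h⟩ then (u ⟨j, h⟩ : ℕ) else headZ n u b (u ⟨j, h⟩)) else 1 := by
  rw [headZ]

lemma extF_coe (n : ℕ) (f : ParF n) (j : (Finset.Icc 2 n : Finset ℕ)) :
    extF n f (j : ℕ) = (f j : ℕ) := by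
  rw [extF, dif_pos j.2]

/-- Per-coordinate condition. -/
def P (n : ℕ) (f : ParF n) (j : (Finset.Icc 2 n : Finset ℕ))
    (p : Bool × (Finset.Icc 1 ((j : ℕ) - 1) : Finset ℕ)) : Prop :=
  if p.1 then (p.2 : ℕ) = (f j : ℕ) else extF n f (p.2 : ℕ) = (f j : ℕ)

lemma key (n : ℕ) (f : ParF n) (ω : ((Finset.Icc 2 n : Finset ℕ) → Bool) × ParF n) :
    (∀ j : (Finset.Icc 2 n : Finset ℕ), headZ n ω.2 ω.1 (j : ℕ) = (f j : ℕ)) ↔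
      (∀ j : (Finset.Icc 2 n : Finset ℕ), P n f j (ω.1 j, ω.2 j)) := by
  constructor
  · intro H
    have hall : ∀ k, headZ n ω.2 ω.1 k = extF n f k := by
      intro k
      by_cases hk : k ∈ Finset.Icc 2 n
      · rw [extF, dif_pos hk]; exact H ⟨k, hk⟩
      · rw [headZ_eq, dif_neg hk, extF, dif_neg hk]
    intro j
    have hj := H j
    rw [headZ_eq, dif_pos j.2] at hj
    unfold P
    cases hb : ω.1 j with
    | true => simp only [hb, Subtype.coe_eta, if_true] at hj ⊢; exact hj
    | false =>
      simp only [hb, Subtype.coe_eta, Bool.false_eq_true, if_false] at hj ⊢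
      rw [← hall]; exact hj
  · intro C
    have hall : ∀ k, headZ n ω.2 ω.1 k = extF n f k := by
      intro k
      induction k using Nat.strong_induction_on with
      | _ k ih =>
        by_cases hk : k ∈ Finset.Icc 2 n
        · rw [headZ_eq, dif_pos hk, extF, dif_pos hk]
          have hc := C ⟨k, hk⟩
          unfold P at hc
          cases hb : ω.1 ⟨k, hk⟩ with
          | true => simp only [hb, if_true] at hc ⊢; exact hc
          | false =>
            simp only [hb, Bool.false_eq_true, if_false] at hc ⊢
            have hlt : (ω.2 ⟨k, hk⟩ : ℕ) < k := by
              have h2 := (ω.2 ⟨k, hk⟩).2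
              simp only [Finset.mem_Icc] at h2 hk
              omega
            rw [ih _ hlt]; exact hc
        · rw [headZ_eq, dif_neg hk, extF, dif_neg hk]
    intro j
    rw [hall (j : ℕ), extF_coe]

/-- The pair space is equivalent to a product over coordinates. -/
def prodEquiv (n : ℕ) : (((Finset.Icc 2 n : Finset ℕ) → Bool) × ParF n) ≃
    (∀ j : (Finset.Icc 2 n : Finset ℕ), Bool × (Finset.Icc 1 ((j : ℕ) - 1) : Finset ℕ)) where
  toFun ω j := (ω.1 j, ω.2 j)
  invFun g := (fun j => (g j).1, fun j => (g j).2)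
  left_inv _ := rfl
  right_inv _ := rfl

lemma card_P (n : ℕ) (f : ParF n) (j : (Finset.Icc 2 n : Finset ℕ)) :
    Fintype.card {p : Bool × (Finset.Icc 1 ((j : ℕ) - 1) : Finset ℕ) // P n f j p}
      = degAt (extF n f) (j : ℕ) (extF n f (j : ℕ)) := by
  have hfj : (f j : ℕ) ∈ Finset.Icc 1 ((j : ℕ) - 1) := (f j).2
  rw [Fintype.card_subtype, Finset.card_filter, Fintype.sum_prod_type, Fintype.sum_bool]
  unfold P
  simp only [if_true, Bool.false_eq_true, if_false]
  have h1 : (∑ y : (Finset.Icc 1 ((j : ℕ) - 1) : Finset ℕ),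
      if (y : ℕ) = (f j : ℕ) then 1 else 0) = 1 := by
    rw [Finset.sum_coe_sort (Finset.Icc 1 ((j : ℕ) - 1))
      (fun k => if k = (f j : ℕ) then 1 else 0), Finset.sum_ite_eq', if_pos hfj]
  have h2 : (∑ y : (Finset.Icc 1 ((j : ℕ) - 1) : Finset ℕ),
      if extF n f (y : ℕ) = (f j : ℕ) then 1 else 0)
      = ((Finset.Icc 1 ((j : ℕ) - 1)).filter (fun k => extF n f k = (f j : ℕ))).card := by
    rw [Finset.sum_coe_sort (Finset.Icc 1 ((j : ℕ) - 1))
      (fun k => if extF n f k = (f j : ℕ) then 1 else 0), Finset.card_filter]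
  rw [h1, h2, degAt, extF_coe]
  simp only [Finset.mem_Icc] at hfj
  rw [if_pos hfj]

lemma card_filter_eq (n : ℕ) (f : ParF n) :
    ((Finset.univ :
        Finset (((Finset.Icc 2 n : Finset ℕ) → Bool) × ParF n)).filter
        (fun ω => ∀ j : (Finset.Icc 2 n : Finset ℕ),
          headZ n ω.2 ω.1 (j : ℕ) = (f j : ℕ))).card
      = ∏ j : (Finset.Icc 2 n : Finset ℕ), degAt (extF n f) (j : ℕ) (extF n f (j : ℕ)) := by
  rw [← Fintype.card_subtype]
  have e : {ω : ((Finset.Icc 2 n : Finset ℕ) → Bool) × ParF n //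
      ∀ j : (Finset.Icc 2 n : Finset ℕ), headZ n ω.2 ω.1 (j : ℕ) = (f j : ℕ)}
      ≃ ∀ j : (Finset.Icc 2 n : Finset ℕ),
        {p : Bool × (Finset.Icc 1 ((j : ℕ) - 1) : Finset ℕ) // P n f j p} :=
    (Equiv.subtypeEquivRight (key n f)).trans
      (((prodEquiv n).subtypeEquiv (fun ω => Iff.rfl)).trans Equiv.subtypePiEquivPi)
  rw [Fintype.card_congr e, Fintype.card_pi]
  exact Finset.prod_congr rfl fun j _ => card_P n f j

lemma card_univ_eq (n : ℕ) :
    ((Finset.univ :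
        Finset (((Finset.Icc 2 n : Finset ℕ) → Bool) × ParF n)).card)
      = ∏ j : (Finset.Icc 2 n : Finset ℕ), (2 * ((j : ℕ) - 1)) := by
  rw [Finset.card_univ, Fintype.card_congr (prodEquiv n), Fintype.card_pi]
  refine Finset.prod_congr rfl fun j _ => ?_
  rw [Fintype.card_prod, Fintype.card_bool, Fintype.card_coe, Nat.card_Icc]; omega

end BAaux

/-- `BA_n` and `Z_n` are identically distributed: for every head-choice function `f`,
the `BA_n` probability `∏_j deg(f(j), BA_{j-1})/(2(j-1))` of producing `f` equals the
probability that uniformly random bits `b` and uniform choices `u` in the copying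
model `Z_n` induce exactly the heads `f`. -/
theorem BA_eq_copying_distribution (n : ℕ) (hn : 2 ≤ n) (f : ParF n) :
    (∏ j : (Finset.Icc 2 n : Finset ℕ),
        (degAt (extF n f) (j : ℕ) (extF n f (j : ℕ)) : ℝ) / (2 * ((j : ℕ) - 1 : ℝ)))
      = (((Finset.univ :
            Finset (((Finset.Icc 2 n : Finset ℕ) → Bool) × ParF n)).filter
            (fun ω => ∀ j : (Finset.Icc 2 n : Finset ℕ),
              headZ n ω.2 ω.1 (j : ℕ) = (f j : ℕ))).card : ℝ)
        / ((Finset.univ :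
            Finset (((Finset.Icc 2 n : Finset ℕ) → Bool) × ParF n)).card : ℝ) := by
  rw [BAaux.card_filter_eq, BAaux.card_univ_eq, Nat.cast_prod, Nat.cast_prod,
    ← Finset.prod_div_distrib]
  refine Finset.prod_congr rfl fun j _ => ?_
  have hj : 2 ≤ (j : ℕ) := (Finset.mem_Icc.mp j.2).1
  congr 1
  have : (1 : ℕ) ≤ (j : ℕ) := by omega
  push_cast [Nat.cast_sub this]
  ring
end

section
/- Let front : [1,n] → [1,n+1] ∪ {nil} be a partial function satisfying the invariant that front(j) ≠ nil implies front(front(j)) ≠ nil, and define nf(j) = {i < j : front(i) ≠ nil and front(i) ≥ j}, pf(j) = [1,j-1] \ nf(j), and φ(j) = |pf(j)|. Then for every x ∈ [1,n-1]: (1) pf(x) ⊆ pf(x+1) ⊆ pf(x) ∪ {x, front⁻¹(x)}; (2) pf(x+1) = pf(x) iff x ∈ K, where K = {i : front(i) ≠ nil and front⁻¹(i) = nil}; (3) φ(x+1) - φ(x) ≤ 1. -/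
attribute [local instance] Classical.propDecidable

/-- Lemma `pf` of the paper. `front : [1,n] → [1,n+1] ∪ {nil}` (values strictly larger
than their argument, injective on values in `[1,n]`) satisfies the invariant
`front(j) ≠ nil → front(front(j)) ≠ nil`. With
`nf(j) = {i < j : front(i) ≠ nil ∧ front(i) ≥ j}`, `pf(j) = [1,j-1] \ nf(j)`,
`φ(j) = |pf(j)|`, `K = {i : front(i) ≠ nil ∧ front⁻¹(i) = nil}`, for every
`x ∈ [1,n-1]`:
(1) `pf(x) ⊆ pf(x+1) ⊆ pf(x) ∪ {x, front⁻¹(x)}`;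
(2) `pf(x+1) = pf(x) ↔ x ∈ K`;
(3) `φ(x+1) - φ(x) ≤ 1`. -/
theorem lemma_pf (n : ℕ) (front : ℕ → Option ℕ)
    (hdom : ∀ j k, front j = some k → 1 ≤ j ∧ j ≤ n ∧ j < k ∧ k ≤ n + 1)
    (hinj : ∀ i i' k, k ≤ n → front i = some k → front i' = some k → i = i')
    (hinv : ∀ j k, front j = some k → k ≤ n → front k ≠ none)
    (x : ℕ) (hx1 : 1 ≤ x) (hxn : x ≤ n - 1) :
    let nf : ℕ → Finset ℕ := fun j =>
      (Finset.Icc 1 (j - 1)).filter (fun i => ∃ k, front i = some k ∧ j ≤ k)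
    let pf : ℕ → Finset ℕ := fun j => Finset.Icc 1 (j - 1) \ nf j
    let φ : ℕ → ℕ := fun j => (pf j).card
    let K : ℕ → Prop := fun i => front i ≠ none ∧ ∀ i', front i' ≠ some i
    (pf x ⊆ pf (x + 1)) ∧
    (∀ y ∈ pf (x + 1), y ∈ pf x ∨ y = x ∨ front y = some x) ∧
    (pf (x + 1) = pf x ↔ K x) ∧
    ((φ (x + 1) : ℤ) - (φ x : ℤ) ≤ 1) := by
  intro nf pf φ K
  have hmem : ∀ j y, y ∈ pf j ↔ (1 ≤ y ∧ y ≤ j - 1 ∧ ∀ k, front y = some k → k < j) := by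
    intro j y
    simp only [pf, nf, Finset.mem_sdiff, Finset.mem_filter, Finset.mem_Icc]
    constructor
    · rintro ⟨⟨h1, h2⟩, h3⟩
      refine ⟨h1, h2, fun k hk => ?_⟩
      by_contra h
      exact h3 ⟨⟨h1, h2⟩, k, hk, by omega⟩
    · rintro ⟨h1, h2, h3⟩
      refine ⟨⟨h1, h2⟩, ?_⟩
      rintro ⟨-, k, hk, hjk⟩
      exact absurd (h3 k hk) (by omega)
  have hsub : pf x ⊆ pf (x+1) := by
    intro y hy
    rw [hmem] at hy ⊢
    obtain ⟨h1, h2, h3⟩ := hy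
    exact ⟨h1, by omega, fun k hk => by have := h3 k hk; omega⟩
  have hsup : ∀ y ∈ pf (x+1), y ∈ pf x ∨ y = x ∨ front y = some x := by
    intro y hy
    rw [hmem] at hy
    obtain ⟨h1, h2, h3⟩ := hy
    rcases eq_or_ne y x with rfl | hne
    · exact Or.inr (Or.inl rfl)
    · have hylt : y ≤ x - 1 := by omega
      by_cases hc : ∀ k, front y = some k → k < x
      · exact Or.inl ((hmem x y).mpr ⟨h1, hylt, hc⟩)
      · push_neg at hc
        obtain ⟨k, hk, hkx⟩ := hc
        have := h3 k hk
        have hkx' : k = x := by omega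
        exact Or.inr (Or.inr (hkx' ▸ hk))
  refine ⟨hsub, hsup, ?_, ?_⟩
  · constructor
    · intro heq
      constructor
      · intro hnone
        have hxin : x ∈ pf (x+1) :=
          (hmem _ _).mpr ⟨hx1, by omega, fun k hk => by simp [hnone] at hk⟩
        rw [heq, hmem] at hxin
        omega
      · intro i' hi'
        obtain ⟨hi1, _, hlt, _⟩ := hdom i' x hi'
        have hi'in : i' ∈ pf (x+1) := (hmem _ _).mpr ⟨by omega, by omega, fun k hk => by
          rw [hi'] at hk; injection hk with h; omega⟩
        rw [heq, hmem] at hi'in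
        exact absurd (hi'in.2.2 x hi') (by omega)
    · rintro ⟨hK1, hK2⟩
      apply Finset.Subset.antisymm _ hsub
      intro y hy
      rcases hsup y hy with h | rfl | h
      · exact h
      · rw [hmem] at hy
        obtain ⟨k, hk⟩ := Option.ne_none_iff_exists'.mp hK1
        exact absurd (hy.2.2 k hk) (by have := (hdom _ _ hk).2.2.1; omega)
      · exact absurd h (hK2 y)
  · have hdiff : ∃ a, pf (x+1) \ pf x ⊆ {a} := by
      by_cases hc : ∃ i', front i' = some x
      · obtain ⟨i0, hi0⟩ := hc
        refine ⟨i0, fun y hy => ?_⟩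
        rw [Finset.mem_sdiff] at hy
        rcases hsup y hy.1 with h | rfl | h
        · exact absurd h hy.2
        · have hfx := hinv i0 y hi0 (by omega)
          rw [hmem] at hy
          obtain ⟨k, hk⟩ := Option.ne_none_iff_exists'.mp hfx
          exact absurd (hy.1.2.2 k hk) (by have := (hdom _ _ hk).2.2.1; omega)
        · rw [Finset.mem_singleton]
          exact hinj y i0 x (by omega) h hi0
      · push_neg at hc
        refine ⟨x, fun y hy => ?_⟩
        rw [Finset.mem_sdiff] at hy
        rcases hsup y hy.1 with h | rfl | h
        · exact absurd h hy.2
        · exact Finset.mem_singleton_self _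
        · exact absurd h (hc y)
    obtain ⟨a, ha⟩ := hdiff
    have h0 := Finset.card_le_card ha
    have h2 : (pf (x+1) \ pf x).card = (pf (x+1)).card - (pf x).card :=
      Finset.card_sdiff_of_subset hsub
    have h3 : (pf x).card ≤ (pf (x+1)).card := Finset.card_le_card hsub
    simp only [Finset.card_singleton] at h0
    simp only [φ]
    omega
end

section
/- Under the hypotheses of the previous lemma (front satisfying the invariant front(j) ≠ nil ⟹ front(front(j)) ≠ nil, with K = {i : front(i) ≠ nil and front⁻¹(i) = nil}), for every x ∈ [1,n-1]: φ(x+1) - φ(x) = 0 if x ∈ K, and φ(x+1) - φ(x) = 1 if x ∉ K. Consequently, for any interval [a,b) the values 1/φ(x) for x ∈ [a,b) \ K form a consecutive harmonic sequence 1/φ(a), 1/(φ(a)+1), …, 1/(φ(a)+|[a,b)\K|-1) when enumerated in increasing order of x. -/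
attribute [local instance] Classical.propDecidable

/-- Equation (aj2) of the paper and the harmonic-sequence observation. Under the
hypotheses of Lemma `pf`, `φ(x+1) - φ(x)` is `0` if `x ∈ K` and `1` if `x ∉ K`;
consequently, for any interval `[a,b)` (with `b ≤ n`), for every `x ∈ [a,b)` we have
`φ(x) = φ(a) + |[a,x) \ K|`, i.e. the values `1/φ(x)` for `x ∈ [a,b) \ K`, enumerated
in increasing order of `x`, form the consecutive harmonic sequence
`1/φ(a), 1/(φ(a)+1), …, 1/(φ(a)+|[a,b)\K|-1)`. -/
theorem eq_aj2_harmonic (n : ℕ) (front : ℕ → Option ℕ)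
    (hdom : ∀ j k, front j = some k → 1 ≤ j ∧ j ≤ n ∧ j < k ∧ k ≤ n + 1)
    (hinj : ∀ i i' k, k ≤ n → front i = some k → front i' = some k → i = i')
    (hinv : ∀ j k, front j = some k → k ≤ n → front k ≠ none) :
    let nf : ℕ → Finset ℕ := fun j =>
      (Finset.Icc 1 (j - 1)).filter (fun i => ∃ k, front i = some k ∧ j ≤ k)
    let pf : ℕ → Finset ℕ := fun j => Finset.Icc 1 (j - 1) \ nf j
    let φ : ℕ → ℕ := fun j => (pf j).card
    let K : ℕ → Prop := fun i => front i ≠ none ∧ ∀ i', front i' ≠ some i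
    (∀ x, 1 ≤ x → x ≤ n - 1 →
      ((K x → φ (x + 1) = φ x) ∧ (¬ K x → φ (x + 1) = φ x + 1))) ∧
    (∀ a b x, 1 ≤ a → a ≤ x → x < b → b ≤ n →
      φ x = φ a + ((Finset.Ico a x).filter (fun y => ¬ K y)).card) := by
  intro nf pf φ K
  have hmem : ∀ j i, i ∈ pf j ↔ (1 ≤ i ∧ i ≤ j - 1 ∧ ∀ k, front i = some k → k < j) := by
    intro j i
    simp only [pf, nf, Finset.mem_sdiff, Finset.mem_filter, Finset.mem_Icc]
    constructor
    · rintro ⟨⟨h1, h2⟩, h3⟩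
      refine ⟨h1, h2, fun k hk => ?_⟩
      by_contra h
      exact h3 ⟨⟨h1, h2⟩, k, hk, by omega⟩
    · rintro ⟨h1, h2, h3⟩
      refine ⟨⟨h1, h2⟩, ?_⟩
      rintro ⟨-, k, hk, hjk⟩
      exact absurd (h3 k hk) (by omega)
  have step : ∀ x, 1 ≤ x → x < n →
      (K x → φ (x + 1) = φ x) ∧ (¬ K x → φ (x + 1) = φ x + 1) := by
    intro x h1 h2
    by_cases hpre : ∃ i, front i = some x
    · obtain ⟨i0, hi0⟩ := hpre
      have hfx : front x ≠ none := hinv i0 x hi0 (by omega)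
      have hKx : ¬ K x := fun hK => hK.2 i0 hi0
      have hdomi0 := hdom i0 x hi0
      have hset : pf (x + 1) = insert i0 (pf x) := by
        ext i
        simp only [Finset.mem_insert, hmem]
        constructor
        · rintro ⟨ha, hb, hc⟩
          by_cases hii : i = i0
          · exact Or.inl hii
          · refine Or.inr ⟨ha, ?_, fun k hk => ?_⟩
            · have hix : i ≠ x := by
                intro h; subst h
                obtain ⟨m, hm⟩ := Option.ne_none_iff_exists'.mp hfx
                have h5 := hc m hm
                have h6 := hdom i m hm
                omega
              omega
            · have hkx : k ≠ x := fun h => hii (hinj i i0 x (by omega) (h ▸ hk) hi0)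
              have := hc k hk
              omega
        · rintro (h | ⟨ha, hb, hc⟩)
          · subst h
            refine ⟨hdomi0.1, by omega, fun k hk => ?_⟩
            rw [hi0] at hk
            injection hk with hk
            omega
          · exact ⟨ha, by omega, fun k hk => by have := hc k hk; omega⟩
      have hnotmem : i0 ∉ pf x := by
        rw [hmem]
        rintro ⟨-, -, hc⟩
        have := hc x hi0
        omega
      have key : φ (x + 1) = φ x + 1 := by
        simp only [φ, hset, Finset.card_insert_of_notMem hnotmem]
      exact ⟨fun hK => absurd hK hKx, fun _ => key⟩
    · push_neg at hpre
      by_cases hfx : front x = none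
      · have hKx : ¬ K x := fun hK => hK.1 hfx
        have hset : pf (x + 1) = insert x (pf x) := by
          ext i
          simp only [Finset.mem_insert, hmem]
          constructor
          · rintro ⟨ha, hb, hc⟩
            by_cases hii : i = x
            · exact Or.inl hii
            · refine Or.inr ⟨ha, by omega, fun k hk => ?_⟩
              have := hc k hk
              have hkx : k ≠ x := fun h => hpre i (h ▸ hk)
              omega
          · rintro (h | ⟨ha, hb, hc⟩)
            · subst h
              exact ⟨h1, by omega, fun k hk => by rw [hfx] at hk; cases hk⟩
            · exact ⟨ha, by omega, fun k hk => by have := hc k hk; omega⟩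
        have hnotmem : x ∉ pf x := by
          rw [hmem]
          rintro ⟨-, hb, -⟩
          omega
        have key : φ (x + 1) = φ x + 1 := by
          simp only [φ, hset, Finset.card_insert_of_notMem hnotmem]
        exact ⟨fun hK => absurd hK hKx, fun _ => key⟩
      · have hKx : K x := ⟨hfx, hpre⟩
        obtain ⟨m, hm⟩ := Option.ne_none_iff_exists'.mp hfx
        have hdm := hdom x m hm
        have hset : pf (x + 1) = pf x := by
          ext i
          simp only [hmem]
          constructor
          · rintro ⟨ha, hb, hc⟩
            refine ⟨ha, ?_, fun k hk => ?_⟩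
            · have hix : i ≠ x := by
                intro h; subst h
                have := hc m hm; omega
              omega
            · have h5 := hc k hk
              have hkx : k ≠ x := fun h => hpre i (h ▸ hk)
              omega
          · rintro ⟨ha, hb, hc⟩
            exact ⟨ha, by omega, fun k hk => by have := hc k hk; omega⟩
        exact ⟨fun _ => by simp only [φ, hset], fun h => absurd hKx h⟩
  constructor
  · intro x h1 h2
    exact step x h1 (by omega)
  · intro a b x ha hax hxb hbn
    induction x, hax using Nat.le_induction with
    | base =>
      simp
    | succ x hax ih =>
      have hxb' : x < b := by omega
      have ih' := ih hxb'
      have hstep := step x (by omega) (by omega)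
      have hIco : Finset.Ico a (x + 1) = insert x (Finset.Ico a x) := by
        ext y; simp only [Finset.mem_Ico, Finset.mem_insert]; omega
      rw [hIco, Finset.filter_insert]
      by_cases hK : K x
      · rw [if_neg (by simpa using hK), hstep.1 hK, ih']
      · rw [if_pos hK, Finset.card_insert_of_notMem (by simp), hstep.2 hK, ih']
        omega
end
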